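/- The full frame-averaged invariant prediction ⟨Φ⟩(X) = (1/8) Σ_{(U,t) ∈ F(X)} Φ((X − 1tᵀ)U) is E(3)-invariant: ⟨Φ⟩(XRᵀ + 1bᵀ) = ⟨Φ⟩(X) for all R ∈ O(3), b ∈ ℝ³. -/

import Mathlib

open Matrix
open scoped BigOperators

/-- The rank-one matrix `1 tᵀ` whose rows all equal `t`. -/
def onesT {n : ℕ} (t : Fin 3 → ℝ) : Matrix (Fin n) (Fin 3) ℝ :=
  Matrix.of fun _ j => t j

/-- The centroid `t = (1/n) Xᵀ 1` of the rows of `X`. -/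
noncomputable def centroid {n : ℕ} (X : Matrix (Fin n) (Fin 3) ℝ) : Fin 3 → ℝ :=
  (n : ℝ)⁻¹ • (Xᵀ *ᵥ fun _ => (1 : ℝ))

/-- The covariance matrix `Σ(X) = (X − 1tᵀ)ᵀ (X − 1tᵀ)` of `X` about its centroid. -/
noncomputable def cov {n : ℕ} (X : Matrix (Fin n) (Fin 3) ℝ) :
    Matrix (Fin 3) (Fin 3) ℝ :=
  (X - onesT (centroid X))ᵀ * (X - onesT (centroid X))

/-- Sign `±1` attached to a Boolean. -/
def signOf (e : Bool) : ℝ := if e then 1 else -1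

/-- The frame matrix `[ε₁u₁, ε₂u₂, ε₃u₃]` with columns the signed
eigenvectors. -/
def signedU (u : Fin 3 → (Fin 3 → ℝ)) (ε : Fin 3 → Bool) :
    Matrix (Fin 3) (Fin 3) ℝ :=
  Matrix.of fun i j => signOf (ε j) * u j i

/-- Full frame-averaged invariant (scalar) prediction over the 8-element PCA
frame. -/
noncomputable def faInv {n : ℕ}
    (Φ : Matrix (Fin n) (Fin 3) ℝ → ℝ)
    (u : Fin 3 → (Fin 3 → ℝ)) (X : Matrix (Fin n) (Fin 3) ℝ) : ℝ :=
  (8 : ℝ)⁻¹ * ∑ ε : Fin 3 → Bool,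
    Φ ((X - onesT (centroid X)) * signedU u ε)

/-!
A rigid motion `X ↦ X Rᵀ + 1 bᵀ` moves the centroid along with the points, so the centred
matrix becomes `(X - 1 tᵀ) Rᵀ` and the covariance is conjugated to `R Σ(X) Rᵀ`. Hence `Rᵀ vⱼ` is a
unit eigenvector of `Σ(X)` for `λⱼ`; the eigenvalues being simple, `Rᵀ vⱼ = ±uⱼ`. Therefore
`Rᵀ [ε₁v₁, ε₂v₂, ε₃v₃]` is again a frame matrix of `u`, with the signs flipped by a fixed pattern,
and flipping signs by a fixed pattern permutes the eight frames, leaving the average unchanged.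
-/

open Function

section Orthonormal

variable {ι : Type*} [Fintype ι]

lemma dotProduct_eq_zero_of_isSymm_of_eigenvalue_ne {A : Matrix ι ι ℝ} (hA : A.IsSymm)
    {x y : ι → ℝ} {μ ν : ℝ} (hx : A *ᵥ x = μ • x) (hy : A *ᵥ y = ν • y) (hμν : μ ≠ ν) :
    x ⬝ᵥ y = 0 := by
  have h : μ * (x ⬝ᵥ y) = ν * (x ⬝ᵥ y) := by
    calc μ * (x ⬝ᵥ y) = (A *ᵥ x) ⬝ᵥ y := by rw [hx, smul_dotProduct, smul_eq_mul]
      _ = x ⬝ᵥ (A *ᵥ y) := by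
        rw [dotProduct_mulVec, ← mulVec_transpose, hA.eq]
      _ = ν * (x ⬝ᵥ y) := by rw [hy, dotProduct_smul, smul_eq_mul]
  have h' : (μ - ν) * (x ⬝ᵥ y) = 0 := by linear_combination h
  exact (mul_eq_zero.mp h').resolve_left (sub_ne_zero.mpr hμν)

lemma eq_sum_dotProduct_smul_of_orthonormal [DecidableEq ι] {u : ι → ι → ℝ}
    (hu : ∀ i j, u i ⬝ᵥ u j = if i = j then 1 else 0) (w : ι → ℝ) :
    w = ∑ i, (u i ⬝ᵥ w) • u i := by
  have hUUt : Matrix.of u * (Matrix.of u)ᵀ = 1 := by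
    ext i j
    simpa [Matrix.mul_apply, Matrix.one_apply, dotProduct] using hu i j
  calc w = (Matrix.of u *ᵥ w) ᵥ* Matrix.of u := by
        rw [← mulVec_transpose, mulVec_mulVec, mul_eq_one_comm.mp hUUt, one_mulVec]
    _ = ∑ i, (u i ⬝ᵥ w) • u i := vecMul_eq_sum _ _

lemma eq_dotProduct_smul_of_eigenvalue [DecidableEq ι] {A : Matrix ι ι ℝ} (hA : A.IsSymm)
    {lam : ι → ℝ} (hlam : Injective lam) {u : ι → ι → ℝ}
    (hu : ∀ i j, u i ⬝ᵥ u j = if i = j then 1 else 0) (heig : ∀ i, A *ᵥ u i = lam i • u i)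
    {w : ι → ℝ} {j : ι} (hw : A *ᵥ w = lam j • w) :
    w = (u j ⬝ᵥ w) • u j := by
  conv_lhs => rw [eq_sum_dotProduct_smul_of_orthonormal hu w]
  refine Finset.sum_eq_single j (fun i _ hij => ?_) (by simp)
  rw [dotProduct_eq_zero_of_isSymm_of_eigenvalue_ne hA (heig i) hw (hlam.ne hij), zero_smul]

lemma exists_eq_signOf_smul_of_eigenvalue [DecidableEq ι] {A : Matrix ι ι ℝ} (hA : A.IsSymm)
    {lam : ι → ℝ} (hlam : Injective lam) {u : ι → ι → ℝ}
    (hu : ∀ i j, u i ⬝ᵥ u j = if i = j then 1 else 0) (heig : ∀ i, A *ᵥ u i = lam i • u i)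
    {w : ι → ℝ} (hw1 : w ⬝ᵥ w = 1) {j : ι} (hw : A *ᵥ w = lam j • w) :
    ∃ e : Bool, w = signOf e • u j := by
  have hwu := eq_dotProduct_smul_of_eigenvalue hA hlam hu heig hw
  have hsq : (u j ⬝ᵥ w) * (u j ⬝ᵥ w) = 1 := by
    rw [hwu, smul_dotProduct, dotProduct_smul, hu] at hw1
    simpa using hw1
  rcases mul_self_eq_one_iff.mp hsq with h | h
  · exact ⟨true, by rwa [h] at hwu⟩
  · exact ⟨false, by rwa [h] at hwu⟩

lemma transpose_mulVec_dotProduct_transpose_mulVec [DecidableEq ι] {R : Matrix ι ι ℝ}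
    (hR : R * Rᵀ = 1) (x y : ι → ℝ) : (Rᵀ *ᵥ x) ⬝ᵥ (Rᵀ *ᵥ y) = x ⬝ᵥ y := by
  rw [mulVec_transpose, dotProduct_mulVec, vecMul_vecMul, hR, vecMul_one]

lemma mulVec_transpose_mulVec_of_conj [DecidableEq ι] {R A : Matrix ι ι ℝ} (hR : Rᵀ * R = 1)
    {x : ι → ℝ} {μ : ℝ} (hx : (R * A * Rᵀ) *ᵥ x = μ • x) : A *ᵥ (Rᵀ *ᵥ x) = μ • (Rᵀ *ᵥ x) := by
  have h := congrArg (Rᵀ *ᵥ ·) hx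
  simp only [mulVec_mulVec, mulVec_smul] at h ⊢
  rwa [← Matrix.mul_assoc, ← Matrix.mul_assoc, hR, Matrix.one_mul] at h

end Orthonormal

section RigidMotion

variable {n : ℕ} (X : Matrix (Fin n) (Fin 3) ℝ) (R : Matrix (Fin 3) (Fin 3) ℝ) (b : Fin 3 → ℝ)

lemma onesT_add (s t : Fin 3 → ℝ) :
    (onesT (s + t) : Matrix (Fin n) (Fin 3) ℝ) = onesT s + onesT t :=
  rfl

lemma onesT_mul_transpose (t : Fin 3 → ℝ) :
    (onesT t : Matrix (Fin n) (Fin 3) ℝ) * Rᵀ = onesT (R *ᵥ t) := by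
  ext i j
  simp [onesT, Matrix.mul_apply, mulVec, dotProduct, mul_comm]

lemma centroid_mul_transpose_add_onesT (hn : n ≠ 0) :
    centroid (X * Rᵀ + onesT b) = R *ᵥ centroid X + b := by
  have hones : (onesT b : Matrix (Fin n) (Fin 3) ℝ)ᵀ *ᵥ (fun _ => (1 : ℝ)) = (n : ℝ) • b := by
    ext j
    simp [onesT, mulVec, dotProduct]
  simp only [centroid, transpose_add, add_mulVec, transpose_mul, transpose_transpose,
    ← mulVec_mulVec, hones, smul_add, mulVec_smul, smul_smul,
    inv_mul_cancel₀ (Nat.cast_ne_zero (R := ℝ) |>.mpr hn), one_smul]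

lemma centered_mul_transpose_add_onesT (hn : n ≠ 0) :
    X * Rᵀ + onesT b - onesT (centroid (X * Rᵀ + onesT b)) = (X - onesT (centroid X)) * Rᵀ := by
  rw [centroid_mul_transpose_add_onesT X R b hn, onesT_add, Matrix.sub_mul, onesT_mul_transpose]
  abel

lemma cov_mul_transpose_add_onesT (hn : n ≠ 0) :
    cov (X * Rᵀ + onesT b) = R * cov X * Rᵀ := by
  simp only [cov, centered_mul_transpose_add_onesT X R b hn, transpose_mul, transpose_transpose,
    Matrix.mul_assoc]

lemma cov_isSymm : (cov X).IsSymm := by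
  simp [Matrix.IsSymm, cov, transpose_mul]

end RigidMotion

section SignFlip

lemma signOf_mul_signOf (a b : Bool) : signOf a * signOf b = signOf (a == b) := by
  cases a <;> cases b <;> simp [signOf]

lemma mul_signedU_of_mulVec_eq {M : Matrix (Fin 3) (Fin 3) ℝ} {u v : Fin 3 → Fin 3 → ℝ}
    {s : Fin 3 → Bool} (h : ∀ j, M *ᵥ v j = signOf (s j) • u j) (ε : Fin 3 → Bool) :
    M * signedU v ε = signedU u (fun j => ε j == s j) := by
  ext i j
  have hij := congrFun (h j) i
  simp only [mulVec, dotProduct, Pi.smul_apply, smul_eq_mul] at hij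
  simp only [Matrix.mul_apply, signedU, of_apply, ← signOf_mul_signOf,
    mul_left_comm _ (signOf (ε j)), ← Finset.mul_sum, hij, mul_assoc]

lemma Fintype.sum_comp_beq {ι M : Type*} [Fintype ι] [DecidableEq ι] [AddCommMonoid M]
    (s : ι → Bool) (f : (ι → Bool) → M) :
    ∑ ε : ι → Bool, f (fun j => ε j == s j) = ∑ ε, f ε :=
  have hinv : Involutive (fun (ε : ι → Bool) j => ε j == s j) := fun ε => by
    funext j
    show ((ε j == s j) == s j) = ε j
    cases ε j <;> cases s j <;> rfl
  Equiv.sum_comp hinv.toPerm f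

end SignFlip

/-- The full frame-averaged invariant prediction over the 8-element PCA frame is
`E(3)`-invariant: `⟨Φ⟩(XRᵀ + 1bᵀ) = ⟨Φ⟩(X)`. Here `u` is an orthonormal
eigenbasis of `Σ(X)` with decreasing eigenvalues, and `v` any corresponding
eigenbasis of `Σ(XRᵀ + 1bᵀ)`. -/
theorem faInv_E3_invariant {n : ℕ} (hn : 0 < n)
    (X : Matrix (Fin n) (Fin 3) ℝ)
    (Φ : Matrix (Fin n) (Fin 3) ℝ → ℝ)
    (lam : Fin 3 → ℝ) (hlam01 : lam 1 < lam 0) (hlam12 : lam 2 < lam 1)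
    (u : Fin 3 → (Fin 3 → ℝ))
    (hortho : ∀ i j, u i ⬝ᵥ u j = if i = j then 1 else 0)
    (heig : ∀ j, cov X *ᵥ u j = lam j • u j)
    (R : Matrix (Fin 3) (Fin 3) ℝ) (hR : Rᵀ * R = 1) (hR' : R * Rᵀ = 1)
    (b : Fin 3 → ℝ) :
    ∀ v : Fin 3 → (Fin 3 → ℝ),
      (∀ i j, v i ⬝ᵥ v j = if i = j then 1 else 0) →
      (∀ j, cov (X * Rᵀ + onesT b) *ᵥ v j = lam j • v j) →
      faInv Φ v (X * Rᵀ + onesT b) = faInv Φ u X := by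
  intro v hv hveig
  have hlam : Injective lam :=
    (Fin.strictAnti_iff_succ_lt.mpr fun i => by fin_cases i <;> assumption).injective
  have hsign : ∀ j, ∃ e : Bool, Rᵀ *ᵥ v j = signOf e • u j := fun j =>
    exists_eq_signOf_smul_of_eigenvalue (cov_isSymm X) hlam hortho heig
      (by rw [transpose_mulVec_dotProduct_transpose_mulVec hR', hv, if_pos rfl])
      (mulVec_transpose_mulVec_of_conj hR <| cov_mul_transpose_add_onesT X R b hn.ne' ▸ hveig j)
  choose s hs using hsign
  simp only [faInv, centered_mul_transpose_add_onesT X R b hn.ne', Matrix.mul_assoc,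
    mul_signedU_of_mulVec_eq hs]
  rw [Fintype.sum_comp_beq s fun ε => Φ ((X - onesT (centroid X)) * signedU u ε)]
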